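/- The residuals of GMRES applied to Ax = b satisfy (r_{k+1}^G)ᵀ A r_k^G = 0 and (r_{k+1}^G)ᵀ (r_j^G − r_i^G) = 0 for all 0 ≤ i ≤ j ≤ k + 1. -/

import Mathlib

open Matrix Filter

noncomputable section

/-- The residual `r(x) = A x - b` of the linear system `A x = b`. -/
def residv {n : ℕ} (A : Matrix (Fin n) (Fin n) ℝ) (b x : Fin n → ℝ) : Fin n → ℝ :=
  A.mulVec x - b

/-- The Euclidean 2-norm on `Fin n → ℝ`. -/
def norm2 {n : ℕ} (x : Fin n → ℝ) : ℝ := Real.sqrt (x ⬝ᵥ x)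

/-- The fixed-point map `q(x) = M x + b` with `M = I - A`. -/
def qmap {n : ℕ} (A : Matrix (Fin n) (Fin n) ℝ) (b x : Fin n → ℝ) : Fin n → ℝ :=
  (1 - A).mulVec x + b

/-- One NGMRES update from step `k`, with window `mk` and coefficients `β`:
`x_{k+1} = q(x_k) + ∑_{i=0}^{mk} β_i (q(x_k) - x_{k-i})`. -/
def ngmresUpdate {n : ℕ} (A : Matrix (Fin n) (Fin n) ℝ) (b : Fin n → ℝ)
    (x : ℕ → Fin n → ℝ) (β : ℕ → ℝ) (k mk : ℕ) : Fin n → ℝ :=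
  qmap A b (x k) + ∑ i ∈ Finset.range (mk + 1), β i • (qmap A b (x k) - x (k - i))

/-- The NGMRES iteration with window function `mk` (e.g. `mk k = min k m` for NGMRES(m),
`mk k = k` for full NGMRES): each step uses coefficients minimizing the 2-norm of the
next residual. -/
def IsNGMRES {n : ℕ} (A : Matrix (Fin n) (Fin n) ℝ) (b x0 : Fin n → ℝ) (mk : ℕ → ℕ)
    (x : ℕ → Fin n → ℝ) (β : ℕ → ℕ → ℝ) : Prop :=
  x 0 = x0 ∧ ∀ k, x (k + 1) = ngmresUpdate A b x (β k) k (mk k) ∧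
    ∀ β' : ℕ → ℝ, norm2 (residv A b (x (k + 1))) ≤
      norm2 (residv A b (ngmresUpdate A b x β' k (mk k)))

/-- The Krylov subspace `span {r0, A r0, …, A^{k-1} r0}`. -/
def krylov {n : ℕ} (A : Matrix (Fin n) (Fin n) ℝ) (r0 : Fin n → ℝ) (k : ℕ) :
    Submodule ℝ (Fin n → ℝ) :=
  Submodule.span ℝ {v | ∃ i < k, v = (A ^ i).mulVec r0}

/-- GMRES: `x_k` minimizes the residual 2-norm over the affine space `x0 + K_k`. -/
def IsGMRES {n : ℕ} (A : Matrix (Fin n) (Fin n) ℝ) (b x0 : Fin n → ℝ)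
    (x : ℕ → Fin n → ℝ) : Prop :=
  x 0 = x0 ∧ ∀ k, x k - x0 ∈ krylov A (residv A b x0) k ∧
    ∀ y : Fin n → ℝ, y - x0 ∈ krylov A (residv A b x0) k →
      norm2 (residv A b (x k)) ≤ norm2 (residv A b y)

/-- One Anderson acceleration update from step `k`, with window `mk`:
`x_{k+1} = q(x_k) + ∑_{i=1}^{mk} γ_i (q(x_k) - q(x_{k-i}))`. -/
def aaUpdate {n : ℕ} (A : Matrix (Fin n) (Fin n) ℝ) (b : Fin n → ℝ)
    (x : ℕ → Fin n → ℝ) (γ : ℕ → ℝ) (k mk : ℕ) : Fin n → ℝ :=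
  qmap A b (x k) + ∑ i ∈ Finset.Icc 1 mk, γ i • (qmap A b (x k) - qmap A b (x (k - i)))

/-- The Anderson acceleration least-squares objective
`r(x_k) + ∑_{i=1}^{mk} γ_i (r(x_k) - r(x_{k-i}))`. -/
def aaObj {n : ℕ} (A : Matrix (Fin n) (Fin n) ℝ) (b : Fin n → ℝ)
    (x : ℕ → Fin n → ℝ) (γ : ℕ → ℝ) (k mk : ℕ) : Fin n → ℝ :=
  residv A b (x k) + ∑ i ∈ Finset.Icc 1 mk, γ i • (residv A b (x k) - residv A b (x (k - i)))

/-- Anderson acceleration with window function `mk`. -/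
def IsAA {n : ℕ} (A : Matrix (Fin n) (Fin n) ℝ) (b x0 : Fin n → ℝ) (mk : ℕ → ℕ)
    (x : ℕ → Fin n → ℝ) (γ : ℕ → ℕ → ℝ) : Prop :=
  x 0 = x0 ∧ ∀ k, x (k + 1) = aaUpdate A b x (γ k) k (mk k) ∧
    ∀ γ' : ℕ → ℝ, norm2 (aaObj A b x (γ k) k (mk k)) ≤ norm2 (aaObj A b x γ' k (mk k))

/-- The spectral norm `‖A‖₂` (the ℓ²→ℓ² operator norm). -/
def specNorm {n : ℕ} (A : Matrix (Fin n) (Fin n) ℝ) : ℝ :=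
  ‖LinearMap.toContinuousLinearMap (Matrix.toEuclideanLin A)‖

/-- The spectral radius of a real matrix (computed over `ℂ`). -/
def specRad {n : ℕ} (M : Matrix (Fin n) (Fin n) ℝ) : ℝ :=
  (spectralRadius ℂ (M.map Complex.ofReal)).toReal

/-!
A GMRES iterate minimizes `‖r(x)‖` over `x0 + K_k`, so the first-order condition for this
least-squares problem gives `r_k ⊥ A K_k`. Both vectors paired with `r_{k+1}` lie in `A K_{k+1}`:
`r_k = r_0 + A (x_k - x_0) ∈ K_{k+1}`, and `r_j - r_i = A (x_j - x_i)` with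
`x_j - x_i ∈ K_{k+1}` once `i, j ≤ k + 1`.
-/

lemma dotProduct_self_nonneg' {n : ℕ} (v : Fin n → ℝ) : 0 ≤ v ⬝ᵥ v :=
  Fintype.sum_nonneg fun i => mul_self_nonneg (v i)

lemma norm2_le_norm2_iff {n : ℕ} {v w : Fin n → ℝ} : norm2 v ≤ norm2 w ↔ v ⬝ᵥ v ≤ w ⬝ᵥ w :=
  Real.sqrt_le_sqrt_iff (dotProduct_self_nonneg' w)

lemma dotProduct_eq_zero_of_forall_dotProduct_self_le {n : ℕ} {r w : Fin n → ℝ}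
    (h : ∀ t : ℝ, r ⬝ᵥ r ≤ (r + t • w) ⬝ᵥ (r + t • w)) : r ⬝ᵥ w = 0 := by
  set c := r ⬝ᵥ w
  set d := w ⬝ᵥ w
  have hd : 0 ≤ d := dotProduct_self_nonneg' w
  have hexpand : ∀ t : ℝ, (r + t • w) ⬝ᵥ (r + t • w) = r ⬝ᵥ r + 2 * t * c + t ^ 2 * d := by
    intro t
    simp only [dotProduct_add, add_dotProduct, dotProduct_smul, smul_dotProduct,
      dotProduct_comm w r, smul_eq_mul, c, d]
    ring
  -- at `t = -c / (d + 1)` the increment of the quadratic is `-c² (d + 2) / (d + 1)²`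
  have hmin := h (-c / (d + 1))
  rw [hexpand] at hmin
  have hd1 : d + 1 ≠ 0 := by positivity
  have hincr : (2 * (-c / (d + 1)) * c + (-c / (d + 1)) ^ 2 * d) * (d + 1) ^ 2
      = -(c ^ 2 * (d + 2)) := by
    field_simp
    ring
  have hc2 : c ^ 2 * (d + 2) ≤ 0 := by
    nlinarith [mul_nonneg (sub_nonneg.mpr hmin) (sq_nonneg (d + 1))]
  exact pow_eq_zero_iff two_ne_zero |>.mp (by nlinarith [sq_nonneg c])

section Krylov

variable {n : ℕ} (A : Matrix (Fin n) (Fin n) ℝ) (r0 : Fin n → ℝ)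

lemma krylov_mono {j k : ℕ} (h : j ≤ k) : krylov A r0 j ≤ krylov A r0 k :=
  Submodule.span_mono fun _ ⟨i, hi, hv⟩ => ⟨i, hi.trans_le h, hv⟩

lemma self_mem_krylov_succ (k : ℕ) : r0 ∈ krylov A r0 (k + 1) :=
  Submodule.subset_span ⟨0, k.succ_pos, by simp⟩

lemma mulVec_mem_krylov_succ {k : ℕ} {v : Fin n → ℝ} (hv : v ∈ krylov A r0 k) :
    A *ᵥ v ∈ krylov A r0 (k + 1) := by
  induction hv using Submodule.span_induction with
  | mem w hw =>
    obtain ⟨i, hi, rfl⟩ := hw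
    exact Submodule.subset_span ⟨i + 1, by omega, by rw [pow_succ', mulVec_mulVec]⟩
  | zero => simp
  | add v w _ _ hv hw => simpa only [mulVec_add] using Submodule.add_mem _ hv hw
  | smul c v _ hv => simpa only [mulVec_smul] using Submodule.smul_mem _ c hv

end Krylov

lemma residv_sub_residv {n : ℕ} (A : Matrix (Fin n) (Fin n) ℝ) (b x y : Fin n → ℝ) :
    residv A b x - residv A b y = A *ᵥ (x - y) := by
  simp only [residv, mulVec_sub]
  abel

namespace IsGMRES

variable {n : ℕ} {A : Matrix (Fin n) (Fin n) ℝ} {b x0 : Fin n → ℝ} {xG : ℕ → Fin n → ℝ}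

lemma residv_dotProduct_mulVec_eq_zero (hG : IsGMRES A b x0 xG) (k : ℕ) {v : Fin n → ℝ}
    (hv : v ∈ krylov A (residv A b x0) k) : residv A b (xG k) ⬝ᵥ (A *ᵥ v) = 0 := by
  obtain ⟨hmem, hmin⟩ := hG.2 k
  refine dotProduct_eq_zero_of_forall_dotProduct_self_le fun t => ?_
  have hy : (xG k + t • v) - x0 ∈ krylov A (residv A b x0) k := by
    simpa only [add_sub_right_comm] using Submodule.add_mem _ hmem (Submodule.smul_mem _ t hv)
  have hres : residv A b (xG k + t • v) = residv A b (xG k) + t • A *ᵥ v := by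
    simp only [residv, mulVec_add, mulVec_smul]
    abel
  rw [← hres, ← norm2_le_norm2_iff]
  exact hmin _ hy

lemma sub_mem_krylov (hG : IsGMRES A b x0 xG) {i j m : ℕ} (hi : i ≤ m) (hj : j ≤ m) :
    xG j - xG i ∈ krylov A (residv A b x0) m := by
  rw [← sub_sub_sub_cancel_right (xG j) (xG i) x0]
  exact Submodule.sub_mem _ (krylov_mono A _ hj (hG.2 j).1) (krylov_mono A _ hi (hG.2 i).1)

lemma residv_mem_krylov_succ (hG : IsGMRES A b x0 xG) (k : ℕ) :
    residv A b (xG k) ∈ krylov A (residv A b x0) (k + 1) := by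
  rw [← sub_add_cancel (residv A b (xG k)) (residv A b x0), residv_sub_residv]
  exact Submodule.add_mem _ (mulVec_mem_krylov_succ A _ (hG.2 k).1) (self_mem_krylov_succ A _ k)

end IsGMRES

/-- GMRES orthogonality properties
`(r_{k+1}^G)ᵀ A r_k^G = 0` and `(r_{k+1}^G)ᵀ (r_j^G - r_i^G) = 0` for `0 ≤ i ≤ j ≤ k+1`. -/
theorem stmt7 (n : ℕ) (A : Matrix (Fin n) (Fin n) ℝ) (b x0 : Fin n → ℝ)
    (xG : ℕ → Fin n → ℝ) (hG : IsGMRES A b x0 xG) (k : ℕ) :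
    residv A b (xG (k + 1)) ⬝ᵥ A.mulVec (residv A b (xG k)) = 0 ∧
    ∀ i j : ℕ, i ≤ j → j ≤ k + 1 →
      residv A b (xG (k + 1)) ⬝ᵥ (residv A b (xG j) - residv A b (xG i)) = 0 := by
  refine ⟨hG.residv_dotProduct_mulVec_eq_zero (k + 1) (hG.residv_mem_krylov_succ k),
    fun i j hij hjk => ?_⟩
  rw [residv_sub_residv]
  exact hG.residv_dotProduct_mulVec_eq_zero (k + 1) (hG.sub_mem_krylov (hij.trans hjk) hjk)

end
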